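/- The Lugo limit satisfies lim_{n→∞} [ Σ_{i=1}^n Σ_{j=1}^n 1/(i+j) − 2·(log 2)·n + log n ] = 3/2 − log(2π) − 16·Σ_{n=1}^∞ n·a_{2n}/4^n (this value equals −1/2 − γ + log 2). -/

import Mathlib

/-!
Write `H n` for the harmonic numbers and `r n = log 2 - (H (2n) - H n)` for the remainder of the
alternating harmonic series. Adding the double sum row by row gives
`(2n+1) H (2n) - (2n+2) H n`, so the expression under the limit is
`log 2 - (2n+1) r n - (H n - log n)`. Since `r n - r (n+1) = 1/((2n+1)(2n+2))` lies between the
consecutive differences of `1/(4n+2)` and of `1/(4n+1)`, and all three sequences tend to `0`,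
`r n` is squeezed between them; hence `(2n+1) r n → 1/2` and the limit is `-1/2 - γ + log 2`.

On the other side, `ξ` agrees near `1/2` with the entire function `ξ₀ s = s (s-1) Λ₀ s / 2 + 1/2`,
which is invariant under `s ↦ 1 - s`, so its odd Taylor coefficients at `1/2` vanish. Expanding
`ξ₀'` around `1/2` and evaluating at `1` gives `∑ 2n a_{2n} / 4^n = ξ₀'(1) / 2 = Λ₀(1) / 4`, where
`Λ₀(1) = (γ - log 4π)/2 + 1`.
-/

open Filter

/-- The Riemann xi function: `ξ(s) = (1/2)·s·(s−1)·π^{−s/2}·Γ(s/2)·ζ(s)`. -/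
noncomputable def riemannXi (s : ℂ) : ℂ := (1 / 2) * s * (s - 1) * completedRiemannZeta s

/-- The `2n`-th Taylor coefficient of `ξ` at `s = 1/2`, a real number. -/
noncomputable def a (n : ℕ) : ℝ :=
  (iteratedDeriv (2 * n) riemannXi (1 / 2)).re / (2 * n).factorial

open Topology Finset
open scoped Nat

theorem iteratedDeriv_eq_zero_of_odd_of_comp_const_sub_eq {𝕜 F : Type*}
    [NontriviallyNormedField 𝕜] [CharZero 𝕜] [NormedAddCommGroup F] [NormedSpace 𝕜 F]
    {f : 𝕜 → F} {s : 𝕜} (hf : ∀ z, f (s - z) = f z) {n : ℕ} (hn : Odd n) :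
    iteratedDeriv n f (s / 2) = 0 := by
  have h := congrFun (iteratedDeriv_comp_const_sub n f s) (s / 2)
  rw [funext hf, sub_half, hn.neg_one_pow, neg_one_smul] at h
  have h2 : (2 : 𝕜) • iteratedDeriv n f (s / 2) = 0 := by
    rw [two_smul]
    nth_rewrite 1 [h]
    exact neg_add_cancel _
  exact (smul_eq_zero.mp h2).resolve_left two_ne_zero

namespace Complex

variable {E : Type*} [NormedAddCommGroup E] [NormedSpace ℂ E] [CompleteSpace E] {f : ℂ → E}

theorem hasSum_mul_deriv_of_entire (hf : Differentiable ℂ f) (c z : ℂ) :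
    HasSum (fun n : ℕ => ((n : ℂ) * (z - c) ^ n / n !) • iteratedDeriv n f c)
      ((z - c) • deriv f z) := by
  rw [← hasSum_nat_add_iff' 1]
  convert (hasSum_taylorSeries_of_entire hf.deriv c z).const_smul (z - c) using 1
  · ext n
    rw [iteratedDeriv_succ', smul_smul, smul_smul]
    congr 1
    push_cast [Nat.factorial_succ]
    field_simp
    ring
  · simp

theorem hasSum_mul_deriv_of_entire_of_odd (hf : Differentiable ℂ f) {c : ℂ}
    (hodd : ∀ n, Odd n → iteratedDeriv n f c = 0) (z : ℂ) :
    HasSum (fun m : ℕ => ((2 * m : ℂ) * (z - c) ^ (2 * m) / (2 * m)!) • iteratedDeriv (2 * m) f c)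
      ((z - c) • deriv f z) := by
  have hinj : Function.Injective (fun m : ℕ => 2 * m) := fun _ _ h => by simpa using h
  refine (hinj.hasSum_iff fun n hn => ?_).mpr (hasSum_mul_deriv_of_entire hf c z)
    |>.congr_fun fun m => by simp
  rw [hodd n (Nat.not_even_iff_odd.mp fun ⟨m, hm⟩ => hn ⟨m, show 2 * m = n by omega⟩), smul_zero]

end Complex

/-- Equals `riemannXi` away from `s = 0, 1`, where Mathlib's `completedRiemannZeta` has junk
values; this is the genuine (entire) `ξ`. -/
noncomputable def riemannXi₀ (s : ℂ) : ℂ := 1 / 2 * s * (s - 1) * completedRiemannZeta₀ s + 1 / 2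

theorem differentiable_riemannXi₀ : Differentiable ℂ riemannXi₀ := by
  have := differentiable_completedZeta₀
  unfold riemannXi₀
  fun_prop

theorem riemannXi₀_one_sub (s : ℂ) : riemannXi₀ (1 - s) = riemannXi₀ s := by
  rw [riemannXi₀, riemannXi₀, completedRiemannZeta₀_one_sub]
  ring

theorem riemannXi_eq_riemannXi₀ {s : ℂ} (h0 : s ≠ 0) (h1 : s ≠ 1) :
    riemannXi s = riemannXi₀ s := by
  rw [riemannXi, riemannXi₀, completedRiemannZeta_eq]
  have h1' : 1 - s ≠ 0 := sub_ne_zero.mpr (Ne.symm h1)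
  field_simp
  ring

theorem iteratedDeriv_riemannXi_half (n : ℕ) :
    iteratedDeriv n riemannXi (1 / 2) = iteratedDeriv n riemannXi₀ (1 / 2) := by
  refine Filter.EventuallyEq.iteratedDeriv_eq n ?_
  filter_upwards [isOpen_ne.mem_nhds (by norm_num : (1 / 2 : ℂ) ≠ 0),
    isOpen_ne.mem_nhds (by norm_num : (1 / 2 : ℂ) ≠ 1)] with s h0 h1
  exact riemannXi_eq_riemannXi₀ h0 h1

theorem hasDerivAt_riemannXi₀_one : HasDerivAt riemannXi₀ (completedRiemannZeta₀ 1 / 2) 1 := by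
  have h := ((((hasDerivAt_id' (1 : ℂ)).const_mul (1 / 2 : ℂ)).mul
    ((hasDerivAt_id' (1 : ℂ)).sub_const 1)).mul
    (differentiable_completedZeta₀ 1).hasDerivAt).add_const (1 / 2 : ℂ)
  exact h.congr_deriv (by simp; ring)

theorem hasSum_mul_a_div_four_pow :
    HasSum (fun n : ℕ => (n : ℝ) * a n / 4 ^ n) ((completedRiemannZeta₀ 1).re / 8) := by
  have hodd (n : ℕ) (hn : Odd n) : iteratedDeriv n riemannXi₀ (1 / 2) = 0 := by
    simpa using iteratedDeriv_eq_zero_of_odd_of_comp_const_sub_eq riemannXi₀_one_sub hn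
  have h := Complex.hasSum_re <|
    Complex.hasSum_mul_deriv_of_entire_of_odd differentiable_riemannXi₀ hodd 1
  rw [hasDerivAt_riemannXi₀_one.deriv, show (1 : ℂ) - 1 / 2 = ((1 / 2 : ℝ) : ℂ) by norm_num] at h
  have hterm (m : ℕ) : ((2 * m * ((1 / 2 : ℝ) : ℂ) ^ (2 * m) / ((2 * m)! : ℕ) : ℂ) •
      iteratedDeriv (2 * m) riemannXi₀ (1 / 2)).re / 2 = m * a m / 4 ^ m := by
    rw [show 2 * (m : ℂ) * ((1 / 2 : ℝ) : ℂ) ^ (2 * m) / ((2 * m)! : ℕ) =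
        ((2 * m / 4 ^ m / ((2 * m)! : ℕ) : ℝ) : ℂ) by
          push_cast; rw [pow_mul, div_pow, one_pow, one_div, inv_pow]; norm_num; ring,
      smul_eq_mul, Complex.re_ofReal_mul, ← iteratedDeriv_riemannXi_half, a]
    ring
  have hvalue : ((1 / 2 : ℝ) • (completedRiemannZeta₀ 1 / 2) : ℂ).re / 2 =
      (completedRiemannZeta₀ 1).re / 8 := by
    rw [Complex.real_smul, Complex.re_ofReal_mul, Complex.div_ofNat_re]
    ring
  rw [← hvalue]
  exact (h.div_const 2).congr_fun fun m => (hterm m).symm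

theorem completedRiemannZeta₀_one_re :
    (completedRiemannZeta₀ 1).re =
      (Real.eulerMascheroniConstant - Real.log (4 * Real.pi)) / 2 + 1 := by
  rw [completedRiemannZeta₀_one]
  simp [Complex.log_re, abs_of_pos Real.pi_pos]

theorem sum_Icc_one_div_add_natCast (m n : ℕ) :
    ∑ i ∈ Icc 1 n, (1 : ℝ) / (i + m) = harmonic (m + n) - harmonic m := by
  induction n with
  | zero => simp
  | succ n ih =>
    rw [sum_Icc_succ_top (by omega), ih, ← add_assoc, harmonic_succ]
    push_cast
    ring

theorem sum_Icc_sum_Icc_one_div_add (n : ℕ) :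
    ∑ i ∈ Icc 1 n, ∑ j ∈ Icc 1 n, (1 : ℝ) / (i + j) =
      (2 * n + 1) * harmonic (2 * n) - (2 * n + 2) * harmonic n := by
  induction n with
  | zero => simp
  | succ n ih =>
    have hlast : ∑ j ∈ Icc 1 (n + 1), (1 : ℝ) / ((n + 1 : ℕ) + j) =
        harmonic (2 * n + 2) - harmonic (n + 1) := by
      simp_rw [add_comm ((n + 1 : ℕ) : ℝ)]
      rw [sum_Icc_one_div_add_natCast, show n + 1 + (n + 1) = 2 * n + 2 by ring]
    rw [sum_Icc_succ_top (by omega), hlast]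
    simp_rw [sum_Icc_succ_top (show 1 ≤ n + 1 by omega)]
    rw [sum_add_distrib, ih, sum_Icc_one_div_add_natCast, show n + 1 + n = 2 * n + 1 by ring,
      show 2 * (n + 1) = 2 * n + 1 + 1 by ring]
    simp only [harmonic_succ]
    push_cast
    field_simp
    ring

noncomputable def logTwoRemainder (n : ℕ) : ℝ := Real.log 2 - (harmonic (2 * n) - harmonic n : ℚ)

theorem logTwoRemainder_sub_succ (n : ℕ) :
    logTwoRemainder n - logTwoRemainder (n + 1) = 1 / ((2 * n + 1) * (2 * n + 2)) := by
  rw [logTwoRemainder, logTwoRemainder, show 2 * (n + 1) = 2 * n + 1 + 1 by ring]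
  simp only [harmonic_succ]
  push_cast
  field_simp
  ring

theorem tendsto_logTwoRemainder : Tendsto logTwoRemainder atTop (𝓝 0) := by
  have h2n := Real.tendsto_harmonic_sub_log.comp (tendsto_id.const_mul_atTop' two_pos)
  have h := (h2n.sub Real.tendsto_harmonic_sub_log).neg
  rw [sub_self, neg_zero] at h
  refine h.congr' ?_
  filter_upwards [eventually_ne_atTop 0] with n hn
  simp only [logTwoRemainder, Function.comp_apply, id, Nat.cast_mul, Nat.cast_ofNat]
  rw [Real.log_mul two_ne_zero (Nat.cast_ne_zero.mpr hn)]
  push_cast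
  ring

theorem le_of_tendsto_zero_of_sub_succ_le {u v : ℕ → ℝ} (hu : Tendsto u atTop (𝓝 0))
    (hv : Tendsto v atTop (𝓝 0)) (h : ∀ n, u n - u (n + 1) ≤ v n - v (n + 1)) (n : ℕ) :
    u n ≤ v n := by
  have hanti : Antitone fun n => v n - u n := antitone_nat_of_succ_le fun n => by linarith [h n]
  have := hanti.le_of_tendsto (by simpa using hv.sub hu) n
  linarith

theorem tendsto_one_div_four_mul_add (c : ℝ) :
    Tendsto (fun n : ℕ => 1 / (4 * n + c)) atTop (𝓝 0) :=
  tendsto_const_nhds.div_atTop <| tendsto_atTop_add_const_right _ c <|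
    tendsto_natCast_atTop_atTop.const_mul_atTop four_pos

theorem one_div_le_logTwoRemainder (n : ℕ) : 1 / (4 * n + 2) ≤ logTwoRemainder n := by
  refine le_of_tendsto_zero_of_sub_succ_le (tendsto_one_div_four_mul_add 2)
    tendsto_logTwoRemainder (fun k => ?_) n
  rw [logTwoRemainder_sub_succ, div_sub_div _ _ (by positivity) (by positivity),
    div_le_div_iff₀ (by positivity) (by positivity)]
  push_cast
  nlinarith

theorem logTwoRemainder_le_one_div (n : ℕ) : logTwoRemainder n ≤ 1 / (4 * n + 1) := by
  refine le_of_tendsto_zero_of_sub_succ_le tendsto_logTwoRemainder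
    (tendsto_one_div_four_mul_add 1) (fun k => ?_) n
  rw [logTwoRemainder_sub_succ, div_sub_div _ _ (by positivity) (by positivity),
    div_le_div_iff₀ (by positivity) (by positivity)]
  push_cast
  nlinarith

theorem tendsto_mul_logTwoRemainder :
    Tendsto (fun n : ℕ => (2 * n + 1) * logTwoRemainder n) atTop (𝓝 (1 / 2)) := by
  have hupper : Tendsto (fun n : ℕ => 1 / 2 + 1 / 2 * (1 / (4 * (n : ℝ) + 1))) atTop
      (𝓝 (1 / 2)) := by
    simpa using ((tendsto_one_div_four_mul_add 1).const_mul (1 / 2 : ℝ)).const_add (1 / 2 : ℝ)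
  refine tendsto_of_tendsto_of_tendsto_of_le_of_le tendsto_const_nhds hupper (fun n => ?_)
    fun n => ?_
  · calc (1 / 2 : ℝ) = (2 * n + 1) * (1 / (4 * n + 2)) := by field_simp; ring
      _ ≤ _ := by gcongr; exact one_div_le_logTwoRemainder n
  · calc (2 * n + 1) * logTwoRemainder n ≤ (2 * n + 1) * (1 / (4 * n + 1)) := by
          gcongr; exact logTwoRemainder_le_one_div n
      _ = _ := by field_simp; ring

theorem tendsto_sum_Icc_sum_Icc_one_div_add_sub_log :
    Tendsto (fun n : ℕ => (∑ i ∈ Icc 1 n, ∑ j ∈ Icc 1 n, (1 : ℝ) / (i + j))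
      - 2 * Real.log 2 * n + Real.log n) atTop
      (𝓝 (-(1 / 2) - Real.eulerMascheroniConstant + Real.log 2)) := by
  have h := (tendsto_mul_logTwoRemainder.neg.sub Real.tendsto_harmonic_sub_log).const_add
    (Real.log 2)
  rw [show Real.log 2 + (-(1 / 2) - Real.eulerMascheroniConstant) =
    -(1 / 2) - Real.eulerMascheroniConstant + Real.log 2 by ring] at h
  refine h.congr fun n => ?_
  rw [sum_Icc_sum_Icc_one_div_add, logTwoRemainder]
  push_cast
  ring

theorem lugo_limit_eq :
    Tendsto (fun n : ℕ =>
        (∑ i ∈ Finset.Icc 1 n, ∑ j ∈ Finset.Icc 1 n, (1 : ℝ) / (i + j))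
          - 2 * Real.log 2 * n + Real.log n) atTop
      (nhds (3 / 2 - Real.log (2 * Real.pi) - 16 * ∑' n : ℕ, (n : ℝ) * a n / 4 ^ n)) ∧
    3 / 2 - Real.log (2 * Real.pi) - 16 * (∑' n : ℕ, (n : ℝ) * a n / 4 ^ n) =
      -(1 / 2) - Real.eulerMascheroniConstant + Real.log 2 := by
  have hlog : Real.log (4 * Real.pi) = Real.log 2 + Real.log (2 * Real.pi) := by
    rw [show 4 * Real.pi = 2 * (2 * Real.pi) by ring,
      Real.log_mul two_ne_zero (by positivity)]
  have hvalue : 3 / 2 - Real.log (2 * Real.pi) - 16 * (∑' n : ℕ, (n : ℝ) * a n / 4 ^ n) =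
      -(1 / 2) - Real.eulerMascheroniConstant + Real.log 2 := by
    rw [hasSum_mul_a_div_four_pow.tsum_eq, completedRiemannZeta₀_one_re, hlog]
    ring
  rw [hvalue]
  exact ⟨tendsto_sum_Icc_sum_Icc_one_div_add_sub_log, rfl⟩
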